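/- arXiv:2603.13809 — 2 statements merged into one kernel-verified Lean document; each statement's English description precedes it below -/
import Mathlib

section
/- Every real solution of the Brown almost-linear system in dimension n is of the form (α, α, ..., α, α^{1-n}) where α is a real root of the polynomial n·a^n − (n+1)·a^{n-1} + 1 = 0; conversely, for any such nonzero root α, the point (α,...,α,α^{1-n}) solves the system. -/
/-- The Brown almost-linear system in dimension `n`: the first `n-1` equations are
`x i + (∑ j, x j) - (n+1) = 0`, and the last equation is `(∏ j, x j) - 1 = 0`. -/
def BrownSol (n : ℕ) (x : Fin n → ℝ) : Prop :=
  (∀ i : Fin n, (i : ℕ) < n - 1 → x i + (∑ j, x j) - (n + 1) = 0) ∧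
  (∏ j, x j) - 1 = 0

/-- The candidate point `(α, ..., α, α^(1-n))` (with `α^(1-n) = (α^(n-1))⁻¹`). -/
noncomputable def BrownPoint (n : ℕ) (α : ℝ) : Fin n → ℝ :=
  fun i => if (i : ℕ) < n - 1 then α else (α ^ (n - 1))⁻¹

/-!
Each linear equation says `x_i = n + 1 - ∑ x`, so the first `n - 1` coordinates of a solution
all equal `α := n + 1 - ∑ x`; the product equation then gives `α ^ (n - 1) * x_n = 1`, so
`α ≠ 0` and `x_n = α ^ (1 - n)`. The linear equation reads `n α + α ^ (1 - n) = n + 1`, which after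
multiplication by `α ^ (n - 1)` is the polynomial equation `n α ^ n - (n + 1) α ^ (n - 1) + 1 = 0`.
-/

section

variable {m : ℕ} {α : ℝ}

@[simp]
lemma brownPoint_castSucc (i : Fin m) : BrownPoint (m + 1) α i.castSucc = α := by
  simp [BrownPoint]

@[simp]
lemma brownPoint_last : BrownPoint (m + 1) α (Fin.last m) = (α ^ m)⁻¹ := by
  simp [BrownPoint]

lemma sum_brownPoint : ∑ j, BrownPoint (m + 1) α j = m * α + (α ^ m)⁻¹ := by
  simp [Fin.sum_univ_castSucc]

lemma prod_brownPoint (hα : α ≠ 0) : ∏ j, BrownPoint (m + 1) α j = 1 := by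
  simp [Fin.prod_univ_castSucc, hα]

lemma eq_brownPoint_iff {x : Fin (m + 1) → ℝ} :
    x = BrownPoint (m + 1) α ↔ (∀ i : Fin m, x i.castSucc = α) ∧ x (Fin.last m) = (α ^ m)⁻¹ := by
  constructor
  · rintro rfl
    simp
  · rintro ⟨hinit, hlast⟩
    funext i
    induction i using Fin.lastCases <;> simp [hinit, hlast]

lemma brown_root_iff (hα : α ≠ 0) :
    ((m + 1 : ℕ) : ℝ) * α ^ (m + 1) - ((m + 1 : ℕ) + 1) * α ^ (m + 1 - 1) + 1 = 0 ↔
      (m + 1) * α + (α ^ m)⁻¹ = m + 2 := by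
  rw [Nat.add_sub_cancel, pow_succ]
  push_cast
  constructor <;> intro h
  · field_simp
    linear_combination h
  · field_simp at h
    linear_combination h

lemma brownSol_brownPoint (hα : α ≠ 0) (hroot : (m + 1) * α + (α ^ m)⁻¹ = m + 2) :
    BrownSol (m + 1) (BrownPoint (m + 1) α) := by
  refine ⟨fun i hi => ?_, by simp [prod_brownPoint hα]⟩
  have hxi : BrownPoint (m + 1) α i = α := by
    simp only [Nat.add_sub_cancel] at hi
    simp [BrownPoint, hi]
  rw [hxi, sum_brownPoint]
  push_cast
  linarith

lemma exists_eq_brownPoint_of_brownSol {x : Fin (m + 1) → ℝ} (hx : BrownSol (m + 1) x) :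
    ∃ α : ℝ, α ≠ 0 ∧ (m + 1) * α + (α ^ m)⁻¹ = m + 2 ∧ x = BrownPoint (m + 1) α := by
  obtain ⟨hlin, hprod⟩ := hx
  -- Unlike `x 0`, this choice of `α` is also the right witness when `m = 0`.
  obtain ⟨α, hα_def⟩ : ∃ α : ℝ, α = m + 2 - ∑ j, x j := ⟨_, rfl⟩
  have hinit : ∀ i : Fin m, x i.castSucc = α := fun i => by
    have := hlin i.castSucc (by simp)
    push_cast at this
    linarith
  have hsum : ∑ j, x j = m * α + x (Fin.last m) := by
    simp [Fin.sum_univ_castSucc, hinit]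
  have hprod' : α ^ m * x (Fin.last m) = 1 := by
    simp only [Fin.prod_univ_castSucc, hinit, Finset.prod_const, Finset.card_univ,
      Fintype.card_fin] at hprod
    linarith
  have hα : α ≠ 0 := by
    rintro rfl
    rcases m with _ | m
    · simp at hα_def hprod'
      linarith
    · simp at hprod'
  have hlast : x (Fin.last m) = (α ^ m)⁻¹ := eq_inv_of_mul_eq_one_right hprod'
  refine ⟨α, hα, ?_, eq_brownPoint_iff.2 ⟨hinit, hlast⟩⟩
  rw [← hlast]
  linarith

end

theorem stmt_0_general (n : ℕ) :
    (∀ x : Fin n → ℝ, BrownSol n x →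
      ∃ α : ℝ, α ≠ 0 ∧ (n : ℝ) * α ^ n - (n + 1) * α ^ (n - 1) + 1 = 0 ∧
        x = BrownPoint n α) ∧
    (∀ α : ℝ, α ≠ 0 → (n : ℝ) * α ^ n - (n + 1) * α ^ (n - 1) + 1 = 0 →
      BrownSol n (BrownPoint n α)) := by
  rcases n with _ | m
  · exact ⟨fun x _ => ⟨1, one_ne_zero, by simp, Subsingleton.elim _ _⟩,
      fun _ _ _ => by simp [BrownSol]⟩
  refine ⟨fun x hx => ?_, fun α hα hroot => brownSol_brownPoint hα ((brown_root_iff hα).1 hroot)⟩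
  obtain ⟨α, hα, hroot, rfl⟩ := exists_eq_brownPoint_of_brownSol hx
  exact ⟨α, hα, (brown_root_iff hα).2 hroot, rfl⟩

theorem stmt_0 (n : ℕ) (hn : 2 ≤ n) :
    (∀ x : Fin n → ℝ, BrownSol n x →
      ∃ α : ℝ, α ≠ 0 ∧ (n : ℝ) * α ^ n - (n + 1) * α ^ (n - 1) + 1 = 0 ∧
        x = BrownPoint n α) ∧
    (∀ α : ℝ, α ≠ 0 → (n : ℝ) * α ^ n - (n + 1) * α ^ (n - 1) + 1 = 0 →
      BrownSol n (BrownPoint n α)) :=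
  stmt_0_general n
end

section
/- The polynomial 9a⁹ − 10a⁸ + 1 has a = 1 as a root, and the number of distinct real roots of 9a⁹ − 10a⁸ + 1 is exactly 3. -/
noncomputable def fbrown : ℝ → ℝ := fun a => 9 * a ^ 9 - 10 * a ^ 8 + 1

lemma fbrown_cont : Continuous fbrown := by
  unfold fbrown; continuity

lemma fbrown_deriv (a : ℝ) : HasDerivAt fbrown (a ^ 7 * (81 * a - 80)) a := by
  have h := (((hasDerivAt_pow 9 a).const_mul 9).sub
      ((hasDerivAt_pow 8 a).const_mul 10)).add_const 1
  have he : a ^ 7 * (81 * a - 80) = 9 * (↑9 * a ^ (9 - 1)) - 10 * (↑8 * a ^ (8 - 1)) := by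
    push_cast; ring
  rw [he]
  exact h

lemma fbrown_mono1 : StrictMonoOn fbrown (Set.Iic (0 : ℝ)) := by
  apply strictMonoOn_of_deriv_pos (convex_Iic 0) fbrown_cont.continuousOn
  intro x hx
  rw [interior_Iic] at hx
  rw [(fbrown_deriv x).deriv]
  have hx' : x < 0 := hx
  have h1 : x ^ 7 < 0 := Odd.pow_neg ⟨3, by norm_num⟩ hx'
  have h2 : 81 * x - 80 < 0 := by linarith
  exact mul_pos_of_neg_of_neg h1 h2

lemma fbrown_anti : StrictAntiOn fbrown (Set.Icc (0 : ℝ) (80/81)) := by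
  apply strictAntiOn_of_deriv_neg (convex_Icc _ _) fbrown_cont.continuousOn
  intro x hx
  rw [interior_Icc] at hx
  rw [(fbrown_deriv x).deriv]
  have h1 : 0 < x ^ 7 := pow_pos hx.1 7
  have h2 : 81 * x - 80 < 0 := by nlinarith [hx.2]
  exact mul_neg_of_pos_of_neg h1 h2

lemma fbrown_mono2 : StrictMonoOn fbrown (Set.Ici (80/81 : ℝ)) := by
  apply strictMonoOn_of_deriv_pos (convex_Ici _) fbrown_cont.continuousOn
  intro x hx
  rw [interior_Ici] at hx
  rw [(fbrown_deriv x).deriv]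
  have hx' : (80/81:ℝ) < x := hx
  have h1 : 0 < x ^ 7 := pow_pos (by linarith) 7
  have h2 : 0 < 81 * x - 80 := by linarith
  exact mul_pos h1 h2

theorem stmt_1 :
    (9 * (1 : ℝ) ^ 9 - 10 * (1 : ℝ) ^ 8 + 1 = 0) ∧
    Set.ncard {a : ℝ | 9 * a ^ 9 - 10 * a ^ 8 + 1 = 0} = 3 := by
  refine ⟨by norm_num, ?_⟩
  have hf0 : fbrown 0 = 1 := by unfold fbrown; norm_num
  have hfm1 : fbrown (-1) = -18 := by unfold fbrown; norm_num
  have hfb : fbrown (80/81) < 0 := by unfold fbrown; norm_num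
  have hf1 : fbrown 1 = 0 := by unfold fbrown; norm_num
  -- root r₁ in [-1, 0]
  obtain ⟨r₁, hr₁mem, hr₁⟩ := intermediate_value_Icc (by norm_num : (-1:ℝ) ≤ 0)
    fbrown_cont.continuousOn (by rw [hfm1, hf0]; constructor <;> norm_num :
      (0:ℝ) ∈ Set.Icc (fbrown (-1)) (fbrown 0))
  -- root r₂ in [0, 80/81]
  obtain ⟨r₂, hr₂mem, hr₂⟩ := intermediate_value_Icc' (by norm_num : (0:ℝ) ≤ 80/81)
    fbrown_cont.continuousOn (by rw [hf0]; exact ⟨le_of_lt hfb, by norm_num⟩ :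
      (0:ℝ) ∈ Set.Icc (fbrown (80/81)) (fbrown 0))
  have hr₁lt : r₁ < 0 := by
    rcases lt_or_eq_of_le hr₁mem.2 with h | h
    · exact h
    · exfalso; rw [h, hf0] at hr₁; norm_num at hr₁
  have hr₂pos : 0 < r₂ := by
    rcases lt_or_eq_of_le hr₂mem.1 with h | h
    · exact h
    · exfalso; rw [← h, hf0] at hr₂; norm_num at hr₂
  have hr₂lt : r₂ < 80/81 := by
    rcases lt_or_eq_of_le hr₂mem.2 with h | h
    · exact h
    · exfalso; rw [h] at hr₂; rw [hr₂] at hfb; norm_num at hfb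
  have hset : {a : ℝ | 9 * a ^ 9 - 10 * a ^ 8 + 1 = 0} = {r₁, r₂, 1} := by
    ext a
    simp only [Set.mem_setOf_eq, Set.mem_insert_iff, Set.mem_singleton_iff]
    constructor
    · intro ha
      have hfa : fbrown a = 0 := ha
      rcases le_or_gt a 0 with h1 | h1
      · left
        exact fbrown_mono1.injOn h1 (Set.mem_Iic.mpr hr₁mem.2) (by rw [hfa, hr₁])
      · rcases le_or_gt a (80/81) with h2 | h2
        · right; left
          exact fbrown_anti.injOn ⟨le_of_lt h1, h2⟩ ⟨hr₂mem.1, hr₂mem.2⟩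
            (by rw [hfa, hr₂])
        · right; right
          exact fbrown_mono2.injOn (le_of_lt h2) (by norm_num : (1:ℝ) ∈ Set.Ici (80/81))
            (by rw [hfa, hf1])
    · rintro (rfl | rfl | rfl)
      · exact hr₁
      · exact hr₂
      · norm_num
  rw [hset]
  rw [Set.ncard_eq_three]
  refine ⟨r₁, r₂, 1, ?_, ?_, ?_, rfl⟩
  · linarith
  · linarith
  · intro h; rw [h] at hr₂lt; linarith
end
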